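/- Let n ≥ 2, k ≥ 1, and let c : Fin n → ((Fin n → Fin k) → ℝ) be the payoff functions of an n-player finite game in which every player has strategy set Fin k. The game is potential if and only if for all players i < j (i, j : Fin n), every strategy profile s : Fin n → Fin k, and all x, y : Fin k, writing d t = c j t − c i t and ⊤ for the last strategy k−1 : Fin k, one has d (update (update s i x) j y) − d (update (update s i x) j ⊤) − d (update (update s i ⊤) j y) + d (update (update s i ⊤) j ⊤) = 0. -/
import Mathlib


/-- An `n`-player finite game with payoff functions `c` (each player has strategy
set `Fin k`) is potential if it admits a potential function `p`. -/
def IsPotentialGame {n k : ℕ} (c : Fin n → (Fin n → Fin k) → ℝ) : Prop :=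
  ∃ p : (Fin n → Fin k) → ℝ,
    ∀ (i : Fin n) (s : Fin n → Fin k) (x y : Fin k),
      c i (Function.update s i x) - c i (Function.update s i y) =
        p (Function.update s i x) - p (Function.update s i y)

/-- The four-cycle expression
`d(s[i:=x][j:=y]) - d(s[i:=x][j:=⊤]) - d(s[i:=⊤][j:=y]) + d(s[i:=⊤][j:=⊤])`. -/
def cycleSum {n k : ℕ} (d : (Fin n → Fin k) → ℝ) (i j : Fin n) (top : Fin k)
    (s : Fin n → Fin k) (x y : Fin k) : ℝ :=
  d (Function.update (Function.update s i x) j y)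
    - d (Function.update (Function.update s i x) j top)
    - d (Function.update (Function.update s i top) j y)
    + d (Function.update (Function.update s i top) j top)

namespace Stmt11Aux

variable {n k : ℕ}

/-- `trunc top m s` agrees with `s` below `m` and is `top` from `m` on. -/
def trunc (top : Fin k) (m : ℕ) (s : Fin n → Fin k) : Fin n → Fin k :=
  fun a => if (a : ℕ) < m then s a else top

lemma trunc_zero (top : Fin k) (s : Fin n → Fin k) : trunc top 0 s = fun _ => top := by
  funext a; simp [trunc]

lemma trunc_of_ge (top : Fin k) {m : ℕ} (hm : n ≤ m) (s : Fin n → Fin k) :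
    trunc top m s = s := by
  funext a; simp [trunc, lt_of_lt_of_le a.isLt hm]

lemma trunc_update_of_le (top : Fin k) {m : ℕ} {i : Fin n} (h : m ≤ (i : ℕ))
    (s : Fin n → Fin k) (x : Fin k) :
    trunc top m (Function.update s i x) = trunc top m s := by
  funext a
  simp only [trunc]
  split
  · next ha =>
    rw [Function.update_of_ne]
    intro e
    subst e
    omega
  · rfl

lemma trunc_update_of_lt (top : Fin k) {m : ℕ} {i : Fin n} (h : (i : ℕ) < m)
    (s : Fin n → Fin k) (x : Fin k) :
    trunc top m (Function.update s i x) = Function.update (trunc top m s) i x := by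
  funext a
  by_cases ha : a = i
  · subst ha; simp [trunc, h]
  · simp [trunc, Function.update_of_ne ha]

lemma trunc_succ (top : Fin k) {m : ℕ} (hm : m < n) (s : Fin n → Fin k) :
    trunc top (m + 1) s = Function.update (trunc top m s) ⟨m, hm⟩ (s ⟨m, hm⟩) := by
  funext a
  by_cases ha : a = ⟨m, hm⟩
  · subst ha; simp [trunc]
  · have hv : (a : ℕ) ≠ m := fun e => ha (Fin.ext e)
    rw [Function.update_of_ne ha]
    simp only [trunc]
    by_cases hb : (a : ℕ) < m
    · rw [if_pos hb, if_pos (by omega)]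
    · rw [if_neg hb, if_neg (by omega)]

lemma trunc_apply_of_ge (top : Fin k) {m : ℕ} {a : Fin n} (h : m ≤ (a : ℕ))
    (s : Fin n → Fin k) : trunc top m s a = top := by
  simp [trunc]; omega

lemma update_self_of_eq {α β : Type*} [DecidableEq α] {f : α → β} {a : α} {v : β}
    (h : f a = v) : Function.update f a v = f := by
  rw [← h, Function.update_eq_self]

end Stmt11Aux

open Stmt11Aux in
theorem stmt11 (n k : ℕ) (hn : 2 ≤ n) (hk : 1 ≤ k)
    (c : Fin n → (Fin n → Fin k) → ℝ) :
    IsPotentialGame c ↔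
      ∀ i j : Fin n, i < j → ∀ (s : Fin n → Fin k) (x y : Fin k),
        cycleSum (fun t => c j t - c i t) i j ⟨k - 1, by omega⟩ s x y = 0 := by
  set top : Fin k := ⟨k - 1, by omega⟩ with htop
  constructor
  · rintro ⟨p, hp⟩ i j hij s x y
    have hne : i ≠ j := Fin.ne_of_lt hij
    simp only [cycleSum]
    have comm : ∀ a b : Fin k, Function.update (Function.update s i a) j b
        = Function.update (Function.update s j b) i a :=
      fun a b => Function.update_comm hne a b s
    have h1 := hp j (Function.update s i x) y top
    have h2 := hp j (Function.update s i top) y top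
    have h3 := hp i (Function.update s j y) x top
    have h4 := hp i (Function.update s j top) x top
    simp only [comm] at h1 h2 ⊢
    linarith [h1, h2, h3, h4]
  · intro h
    refine ⟨fun s => ∑ m ∈ Finset.range n,
      if hm : m < n then
        c ⟨m, hm⟩ (trunc top (m + 1) s) - c ⟨m, hm⟩ (trunc top m s)
      else 0, ?_⟩
    intro i s x y
    set s₁ := Function.update s i x with hs₁
    set s₂ := Function.update s i y with hs₂
    set F : ℕ → ℝ := fun m => c i (trunc top m s₁) - c i (trunc top m s₂) with hFdef
    have key : ∀ m ∈ Finset.range n,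
        ((if hm : m < n then
            c ⟨m, hm⟩ (trunc top (m + 1) s₁) - c ⟨m, hm⟩ (trunc top m s₁)
          else 0)
          - (if hm : m < n then
            c ⟨m, hm⟩ (trunc top (m + 1) s₂) - c ⟨m, hm⟩ (trunc top m s₂)
          else 0)) = F (m + 1) - F m := by
      intro m hmr
      have hm : m < n := Finset.mem_range.mp hmr
      rw [dif_pos hm, dif_pos hm]
      set j : Fin n := ⟨m, hm⟩ with hj
      rcases lt_trichotomy m (i : ℕ) with hlt | heq | hgt
      · -- m < i : everything below i agrees
        have e1 : trunc top (m + 1) s₁ = trunc top (m + 1) s₂ := by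
          rw [hs₁, hs₂, trunc_update_of_le top (by omega), trunc_update_of_le top (by omega)]
        have e2 : trunc top m s₁ = trunc top m s₂ := by
          rw [hs₁, hs₂, trunc_update_of_le top (by omega), trunc_update_of_le top (by omega)]
        simp only [hFdef, e1, e2]
        ring
      · -- m = i
        have hji : j = i := Fin.ext heq
        have e2 : trunc top m s₁ = trunc top m s₂ := by
          rw [hs₁, hs₂, trunc_update_of_le top (by omega), trunc_update_of_le top (by omega)]
        simp only [hFdef, hji, e2]
        ring
      · -- i < m
        have hij : i < j := hgt
        have hine : i ≠ j := Fin.ne_of_lt hij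
        set w := trunc top m s with hw
        have hwtop : w j = top := trunc_apply_of_ge top (by simp [hj]) s
        have rw1 : ∀ z : Fin k, trunc top (m + 1) (Function.update s i z)
            = Function.update (Function.update w i z) j (s j) := by
          intro z
          rw [trunc_update_of_lt top (by omega), trunc_succ top hm, ← hj, ← hw,
            Function.update_comm hine.symm]
        have rw2 : ∀ z : Fin k, trunc top m (Function.update s i z)
            = Function.update (Function.update w i z) j top := by
          intro z
          have hz : (Function.update w i z) j = top := by
            rw [Function.update_of_ne hine.symm]; exact hwtop
          rw [trunc_update_of_lt top (by omega), ← hw, update_self_of_eq hz]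
        have e1 := h i j hij w x (s j)
        have e2 := h i j hij w y (s j)
        simp only [cycleSum] at e1 e2
        simp only [hFdef, hs₁, hs₂, rw1, rw2]
        linarith [e1, e2]
    calc c i (Function.update s i x) - c i (Function.update s i y)
        = F n - F 0 := by
          simp only [hFdef, trunc_of_ge top le_rfl, trunc_zero top, hs₁, hs₂]
          ring
      _ = ∑ m ∈ Finset.range n, (F (m + 1) - F m) := (Finset.sum_range_sub F n).symm
      _ = _ := by
          rw [← Finset.sum_congr rfl key, Finset.sum_sub_distrib]
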